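/- arXiv:2604.21359 — 6 statements merged into one kernel-verified Lean document; each statement's English description precedes it below -/
import Mathlib

section
/- Let S be a measurable space, let D ≥ 1, and let G : ℝ^D → ℝ be monotone and quasi-linear. For each α ∈ {1,…,D}, let r_α : S → ℝ be a bounded measurable function, let δ_α be a real number with 0 ≤ δ_α ≤ δ for a fixed constant δ < 1, and let κ_α be a Markov kernel from S to S. Let B denote the space of bounded measurable real-valued functions on S equipped with the supremum norm, and define the operator Λ on B by Λ(v)(s) = G( (r_α(s) + δ_α · ∫ v(s') dκ_α(s)(s'))_{α=1,…,D} ). Then Λ maps B into itself, Λ is a contraction with Lipschitz constant δ (i.e., ‖Λ(v) − Λ(w)‖_∞ ≤ δ·‖v − w‖_∞ for all v, w ∈ B), and Λ admits a unique fixed point v* ∈ B. -/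
open MeasureTheory ProbabilityTheory

private lemma G_lip {D : ℕ} (G : (Fin D → ℝ) → ℝ)
    (hGmono : ∀ η η' : Fin D → ℝ, (∀ α, η α ≤ η' α) → G η ≤ G η')
    (hGql : ∀ (η : Fin D → ℝ) (c : ℝ), G (fun α => η α + c) = G η + c)
    (a b : Fin D → ℝ) (c : ℝ) (hc : ∀ α, |a α - b α| ≤ c) : |G a - G b| ≤ c := by
  have h1 : ∀ x y : Fin D → ℝ, (∀ α, |x α - y α| ≤ c) → G x - G y ≤ c := by
    intro x y h
    have hx : G x ≤ G (fun α => y α + c) := by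
      refine hGmono _ _ (fun α => ?_)
      have := (abs_le.1 (h α)).2
      linarith
    rw [hGql] at hx
    linarith
  have h2 := h1 b a (fun α => by rw [abs_sub_comm]; exact hc α)
  have h3 := h1 a b hc
  rw [abs_le]; constructor <;> linarith

/-- The expected Bellman operator of the SMDP is a contraction on the space `B` of
bounded measurable functions (with sup norm) and admits a unique fixed point there. -/
theorem expected_bellman_contraction
    {S : Type*} [MeasurableSpace S] (D : ℕ) (hD : 1 ≤ D)
    (G : (Fin D → ℝ) → ℝ)
    (hGmono : ∀ η η' : Fin D → ℝ, (∀ α, η α ≤ η' α) → G η ≤ G η')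
    (hGql : ∀ (η : Fin D → ℝ) (c : ℝ), G (fun α => η α + c) = G η + c)
    (r : Fin D → S → ℝ)
    (hrmeas : ∀ α, Measurable (r α))
    (hrbdd : ∀ α, ∃ C : ℝ, ∀ s, |r α s| ≤ C)
    (δ : ℝ) (hδ : δ < 1)
    (δ' : Fin D → ℝ) (hδ'0 : ∀ α, 0 ≤ δ' α) (hδ'le : ∀ α, δ' α ≤ δ)
    (κ : Fin D → Kernel S S) (hκ : ∀ α, IsMarkovKernel (κ α))
    (Λ : (S → ℝ) → (S → ℝ))
    (hΛ : ∀ (v : S → ℝ) (s : S),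
      Λ v s = G (fun α => r α s + δ' α * ∫ s', v s' ∂(κ α s))) :
    (∀ v : S → ℝ, (Measurable v ∧ ∃ C : ℝ, ∀ s, |v s| ≤ C) →
      (Measurable (Λ v) ∧ ∃ C : ℝ, ∀ s, |Λ v s| ≤ C)) ∧
    (∀ v w : S → ℝ, (Measurable v ∧ ∃ C : ℝ, ∀ s, |v s| ≤ C) →
      (Measurable w ∧ ∃ C : ℝ, ∀ s, |w s| ≤ C) →
      (⨆ s, |Λ v s - Λ w s|) ≤ δ * ⨆ s, |v s - w s|) ∧
    (∃! v : S → ℝ, (Measurable v ∧ ∃ C : ℝ, ∀ s, |v s| ≤ C) ∧ Λ v = v) := by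
  classical
  haveI : Nonempty (Fin D) := ⟨⟨0, hD⟩⟩
  have hδ0 : 0 ≤ δ := le_trans (hδ'0 ⟨0, hD⟩) (hδ'le ⟨0, hD⟩)
  -- integrability of bounded measurable functions
  have hint : ∀ (v : S → ℝ) (C : ℝ), Measurable v → (∀ s, |v s| ≤ C) →
      ∀ (α : Fin D) (s : S), Integrable v (κ α s) := by
    intro v C hv hC α s
    haveI := hκ α
    exact ⟨hv.aestronglyMeasurable,
      HasFiniteIntegral.of_bounded (C := C)
        (ae_of_all _ fun s' => by simpa [Real.norm_eq_abs] using hC s')⟩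
  -- bound on kernel integrals
  have hIb : ∀ (v : S → ℝ) (C : ℝ), (∀ s, |v s| ≤ C) →
      ∀ (α : Fin D) (s : S), |∫ s', v s' ∂(κ α s)| ≤ C := by
    intro v C hC α s
    haveI := hκ α
    have := norm_integral_le_of_norm_le_const (μ := κ α s) (f := v) (C := C)
      (ae_of_all _ fun s' => by simpa [Real.norm_eq_abs] using hC s')
    simpa [Real.norm_eq_abs, measure_univ] using this
  -- key pointwise contraction estimate
  have key : ∀ (v w : S → ℝ), Measurable v → Measurable w →
      (∃ C, ∀ s, |v s| ≤ C) → (∃ C, ∀ s, |w s| ≤ C) →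
      ∀ (M : ℝ), (∀ s', |v s' - w s'| ≤ M) → ∀ s, |Λ v s - Λ w s| ≤ δ * M := by
    rintro v w hv hw ⟨Cv, hCv⟩ ⟨Cw, hCw⟩ M hM s
    have hM0 : 0 ≤ M := le_trans (abs_nonneg _) (hM s)
    rw [hΛ, hΛ]
    refine G_lip G hGmono hGql _ _ _ (fun α => ?_)
    haveI := hκ α
    have hiv := hint v Cv hv hCv α s
    have hiw := hint w Cw hw hCw α s
    have hsub : (∫ s', v s' ∂(κ α s)) - ∫ s', w s' ∂(κ α s)
        = ∫ s', (v s' - w s') ∂(κ α s) := (integral_sub hiv hiw).symm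
    have hb : |(∫ s', v s' ∂(κ α s)) - ∫ s', w s' ∂(κ α s)| ≤ M := by
      rw [hsub]
      exact hIb _ M (fun s' => hM s') α s
    have heq : (r α s + δ' α * ∫ s', v s' ∂(κ α s))
        - (r α s + δ' α * ∫ s', w s' ∂(κ α s))
        = δ' α * ((∫ s', v s' ∂(κ α s)) - ∫ s', w s' ∂(κ α s)) := by ring
    rw [heq, abs_mul, abs_of_nonneg (hδ'0 α)]
    calc δ' α * |(∫ s', v s' ∂(κ α s)) - ∫ s', w s' ∂(κ α s)|
        ≤ δ' α * M := mul_le_mul_of_nonneg_left hb (hδ'0 α)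
      _ ≤ δ * M := mul_le_mul_of_nonneg_right (hδ'le α) hM0
  -- continuity of G
  have hGcont : Continuous G := by
    have : LipschitzWith 1 G := by
      refine LipschitzWith.of_dist_le_mul fun a b => ?_
      rw [Real.dist_eq, NNReal.coe_one, one_mul]
      refine G_lip G hGmono hGql a b _ (fun α => ?_)
      rw [← Real.dist_eq]
      exact dist_le_pi_dist a b α
    exact this.continuous
  -- part 1
  have part1 : ∀ v : S → ℝ, (Measurable v ∧ ∃ C : ℝ, ∀ s, |v s| ≤ C) →
      (Measurable (Λ v) ∧ ∃ C : ℝ, ∀ s, |Λ v s| ≤ C) := by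
    rintro v ⟨hv, Cv, hCv⟩
    have hImeas : ∀ α : Fin D, Measurable (fun s => ∫ s', v s' ∂(κ α s)) := by
      intro α
      haveI := hκ α
      have h : StronglyMeasurable (Function.uncurry fun (_ : S) (s' : S) => v s') :=
        (hv.comp measurable_snd).stronglyMeasurable
      exact (MeasureTheory.StronglyMeasurable.integral_kernel_prod_right
        (κ := κ α) h).measurable
    have hΛeq : Λ v = fun s => G (fun α => r α s + δ' α * ∫ s', v s' ∂(κ α s)) :=
      funext (hΛ v)
    constructor
    · rw [hΛeq]
      exact hGcont.measurable.comp
        (measurable_pi_lambda _ fun α => (hrmeas α).add (measurable_const.mul (hImeas α)))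
    · choose Cr hCr using hrbdd
      set C0 : ℝ := Finset.univ.sup' Finset.univ_nonempty Cr with hC0def
      refine ⟨|G 0| + (C0 + |Cv|), fun s => ?_⟩
      rw [hΛ]
      have h1 : |G (fun α => r α s + δ' α * ∫ s', v s' ∂(κ α s)) - G 0| ≤ C0 + |Cv| := by
        refine G_lip G hGmono hGql _ _ _ (fun α => ?_)
        simp only [Pi.zero_apply, sub_zero]
        have hIv : |∫ s', v s' ∂(κ α s)| ≤ |Cv| :=
          le_trans (hIb v Cv hCv α s) (le_abs_self Cv)
        have h2 : δ' α ≤ 1 := le_of_lt (lt_of_le_of_lt (hδ'le α) hδ)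
        have h3 : |δ' α * ∫ s', v s' ∂(κ α s)| ≤ |Cv| := by
          rw [abs_mul, abs_of_nonneg (hδ'0 α)]
          calc δ' α * |∫ s', v s' ∂(κ α s)| ≤ 1 * |Cv| :=
                mul_le_mul h2 hIv (abs_nonneg _) zero_le_one
            _ = |Cv| := one_mul _
        have h4 : Cr α ≤ C0 := Finset.le_sup' Cr (Finset.mem_univ α)
        calc |r α s + δ' α * ∫ s', v s' ∂(κ α s)|
            ≤ |r α s| + |δ' α * ∫ s', v s' ∂(κ α s)| := abs_add_le _ _
          _ ≤ C0 + |Cv| := add_le_add (le_trans (hCr α s) h4) h3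
      have h5 := abs_add_le (G (fun α => r α s + δ' α * ∫ s', v s' ∂(κ α s)) - G 0) (G 0)
      rw [sub_add_cancel] at h5
      linarith
  -- part 2
  have part2 : ∀ v w : S → ℝ, (Measurable v ∧ ∃ C : ℝ, ∀ s, |v s| ≤ C) →
      (Measurable w ∧ ∃ C : ℝ, ∀ s, |w s| ≤ C) →
      (⨆ s, |Λ v s - Λ w s|) ≤ δ * ⨆ s, |v s - w s| := by
    rintro v w ⟨hv, Cv, hCv⟩ ⟨hw, Cw, hCw⟩
    have hbdd : BddAbove (Set.range fun s => |v s - w s|) := by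
      refine ⟨Cv + Cw, ?_⟩
      rintro x ⟨s, rfl⟩
      calc |v s - w s| ≤ |v s| + |w s| := abs_sub _ _
        _ ≤ Cv + Cw := add_le_add (hCv s) (hCw s)
    have hM : ∀ s', |v s' - w s'| ≤ ⨆ s, |v s - w s| := fun s' => le_ciSup hbdd s'
    have hM0 : 0 ≤ ⨆ s, |v s - w s| := Real.iSup_nonneg (fun s => abs_nonneg _)
    exact Real.iSup_le
      (fun s => key v w hv hw ⟨Cv, hCv⟩ ⟨Cw, hCw⟩ _ hM s)
      (mul_nonneg hδ0 hM0)
  refine ⟨part1, part2, ?_⟩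
  -- part 3: existence and uniqueness of the fixed point
  letI : TopologicalSpace S := ⊥
  haveI : DiscreteTopology S := ⟨rfl⟩
  have hclosed : IsClosed {f : BoundedContinuousFunction S ℝ | Measurable ⇑f} := by
    refine IsSeqClosed.isClosed ?_
    intro x p hx hxp
    have hpt : ∀ s : S, Filter.Tendsto (fun n => (x n) s) Filter.atTop (nhds (p s)) := by
      intro s
      have hd : Filter.Tendsto (fun n => dist (x n) p) Filter.atTop (nhds 0) :=
        tendsto_iff_dist_tendsto_zero.mp hxp
      exact tendsto_iff_dist_tendsto_zero.mpr
        (squeeze_zero (fun n => dist_nonneg)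
          (fun n => BoundedContinuousFunction.dist_coe_le_dist s) hd)
    exact measurable_of_tendsto_metrizable' Filter.atTop (fun n => hx n)
      (tendsto_pi_nhds.mpr hpt)
  haveI : CompleteSpace {f : BoundedContinuousFunction S ℝ // Measurable ⇑f} := hclosed.completeSpace_coe
  haveI : Nonempty {f : BoundedContinuousFunction S ℝ // Measurable ⇑f} :=
    ⟨⟨0, by rw [BoundedContinuousFunction.coe_zero]; exact measurable_const⟩⟩
  have hmapdef : ∀ f : {f : BoundedContinuousFunction S ℝ // Measurable ⇑f},
      Measurable (Λ ⇑f.1) ∧ ∃ C, ∀ s, |Λ (⇑f.1) s| ≤ C := fun f =>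
    part1 _ ⟨f.2, ‖f.1‖, fun s => by
      simpa [Real.norm_eq_abs] using f.1.norm_coe_le_norm s⟩
  set T : {f : BoundedContinuousFunction S ℝ // Measurable ⇑f} → {f : BoundedContinuousFunction S ℝ // Measurable ⇑f} := fun f =>
    ⟨BoundedContinuousFunction.ofNormedAddCommGroup (Λ ⇑f.1) continuous_of_discreteTopology
      (Classical.choose (hmapdef f).2)
      (fun s => by simpa [Real.norm_eq_abs] using Classical.choose_spec (hmapdef f).2 s),
     (hmapdef f).1⟩ with hTdef
  have hTcoe : ∀ f, ⇑(T f).1 = Λ ⇑f.1 := fun f => rfl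
  have hcontr : ContractingWith ⟨δ, hδ0⟩ T := by
    constructor
    · exact_mod_cast hδ
    · refine LipschitzWith.of_dist_le_mul fun f g => ?_
      have hMle : ∀ s', |(⇑f.1) s' - (⇑g.1) s'| ≤ dist f g := by
        intro s'
        rw [← Real.dist_eq]
        calc dist (f.1 s') (g.1 s') ≤ dist f.1 g.1 :=
              BoundedContinuousFunction.dist_coe_le_dist s'
          _ = dist f g := (Subtype.dist_eq f g).symm
      have hfb : ∃ C, ∀ s, |(⇑f.1) s| ≤ C :=
        ⟨‖f.1‖, fun s => by simpa [Real.norm_eq_abs] using f.1.norm_coe_le_norm s⟩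
      have hgb : ∃ C, ∀ s, |(⇑g.1) s| ≤ C :=
        ⟨‖g.1‖, fun s => by simpa [Real.norm_eq_abs] using g.1.norm_coe_le_norm s⟩
      have hpt : ∀ s, dist ((T f).1 s) ((T g).1 s) ≤ δ * dist f g := by
        intro s
        rw [hTcoe, hTcoe, Real.dist_eq]
        exact key _ _ f.2 g.2 hfb hgb (dist f g) hMle s
      rw [Subtype.dist_eq]
      have h0 : (0 : ℝ) ≤ δ * dist f g := mul_nonneg hδ0 dist_nonneg
      exact (BoundedContinuousFunction.dist_le h0).mpr hpt
  have hp : Function.IsFixedPt T (ContractingWith.fixedPoint T hcontr) :=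
    hcontr.fixedPoint_isFixedPt
  set p := ContractingWith.fixedPoint T hcontr with hpdef
  have hfix : Λ ⇑p.1 = ⇑p.1 := by
    have h := congrArg (fun q : {f : BoundedContinuousFunction S ℝ // Measurable ⇑f} => ⇑q.1) hp
    simpa [hTcoe] using h
  have hpbdd : ∃ C, ∀ s, |(⇑p.1) s| ≤ C :=
    ⟨‖p.1‖, fun s => by simpa [Real.norm_eq_abs] using p.1.norm_coe_le_norm s⟩
  refine ⟨⇑p.1, ⟨⟨p.2, hpbdd⟩, hfix⟩, ?_⟩
  rintro w ⟨⟨hwmeas, Cw, hCw⟩, hwfix⟩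
  obtain ⟨Cp, hCp⟩ := hpbdd
  have hbdd : BddAbove (Set.range fun s => |w s - (⇑p.1) s|) := by
    refine ⟨Cw + Cp, ?_⟩
    rintro x ⟨s, rfl⟩
    calc |w s - (⇑p.1) s| ≤ |w s| + |(⇑p.1) s| := abs_sub _ _
      _ ≤ Cw + Cp := add_le_add (hCw s) (hCp s)
  have hM : ∀ s', |w s' - (⇑p.1) s'| ≤ ⨆ s, |w s - (⇑p.1) s| := fun s' => le_ciSup hbdd s'
  have hM0 : 0 ≤ ⨆ s, |w s - (⇑p.1) s| := Real.iSup_nonneg (fun s => abs_nonneg _)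
  have hMle : (⨆ s, |w s - (⇑p.1) s|) ≤ δ * ⨆ s, |w s - (⇑p.1) s| := by
    refine Real.iSup_le (fun s => ?_) (mul_nonneg hδ0 hM0)
    have h := key w (⇑p.1) hwmeas p.2 ⟨Cw, hCw⟩ ⟨Cp, hCp⟩ _ hM s
    rwa [hwfix, hfix] at h
  have hMzero : (⨆ s, |w s - (⇑p.1) s|) ≤ 0 := by nlinarith
  funext s
  have h := le_trans (hM s) hMzero
  have h2 : w s - (⇑p.1) s = 0 := abs_nonpos_iff.mp h
  linarith
end

section
/- Let 0 < a ≤ b, let κ ≥ 0, and let t : ℝ → ℝ be differentiable on [a,b] with t(u) > 0 and 0 ≤ u·t'(u) ≤ κ·t(u) for all u ∈ [a,b]. Then for all u, ũ ∈ [a,b], |log t(u) − log t(ũ)| ≤ κ·|log u − log ũ|. -/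
/-!
Both `log ∘ t` and `κ • log - log ∘ t` have nonnegative derivatives `t'/t` and
`(κ t - u t') / (u t)` on `[a, b]`, so both are monotone there. An increment of `log ∘ t` is
therefore nonnegative and at most the corresponding increment of `κ • log`.
-/

open Set Real

theorem Convex.monotoneOn_of_hasDerivWithinAt_nonneg {s : Set ℝ} (hs : Convex ℝ s)
    {f f' : ℝ → ℝ} (hf : ∀ x ∈ s, HasDerivWithinAt f (f' x) s x)
    (hf'₀ : ∀ x ∈ s, 0 ≤ f' x) : MonotoneOn f s :=
  _root_.monotoneOn_of_hasDerivWithinAt_nonneg hs (fun x hx ↦ (hf x hx).continuousWithinAt)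
    (fun x hx ↦ (hf x (interior_subset hx)).mono interior_subset)
    (fun x hx ↦ hf'₀ x (interior_subset hx))

theorem abs_sub_le_abs_sub_of_monotoneOn {α : Type*} [LinearOrder α] {s : Set α}
    {f g : α → ℝ} (hf : MonotoneOn f s) (hgf : MonotoneOn (g - f) s)
    {x y : α} (hx : x ∈ s) (hy : y ∈ s) : |f x - f y| ≤ |g x - g y| := by
  wlog hxy : x ≤ y generalizing x y
  · rw [abs_sub_comm, abs_sub_comm (g x)]
    exact this hy hx (le_of_not_ge hxy)
  have hf_le : f x ≤ f y := hf hx hy hxy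
  have hgf_le : g x - f x ≤ g y - f y := hgf hx hy hxy
  rw [abs_sub_comm, abs_of_nonneg (by linarith), abs_sub_comm, abs_of_nonneg (by linarith)]
  linarith

theorem log_lipschitz_of_elasticity_bound_general
    (a b : ℝ) (ha : 0 < a)
    (κ : ℝ) (hκ : 0 ≤ κ)
    (t t' : ℝ → ℝ)
    (hderiv : ∀ u ∈ Set.Icc a b, HasDerivWithinAt t (t' u) (Set.Icc a b) u)
    (hpos : ∀ u ∈ Set.Icc a b, 0 < t u)
    (hlo : ∀ u ∈ Set.Icc a b, 0 ≤ u * t' u)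
    (hhi : ∀ u ∈ Set.Icc a b, u * t' u ≤ κ * t u) :
    ∀ u ∈ Set.Icc a b, ∀ u' ∈ Set.Icc a b,
      |Real.log (t u) - Real.log (t u')| ≤ κ * |Real.log u - Real.log u'| := by
  have hu_pos : ∀ u ∈ Icc a b, 0 < u := fun u hu ↦ ha.trans_le hu.1
  have hlog_t : ∀ u ∈ Icc a b, HasDerivWithinAt (fun v ↦ log (t v)) (t' u / t u) (Icc a b) u :=
    fun u hu ↦ (hderiv u hu).log (hpos u hu).ne'
  have hmono : MonotoneOn (fun v ↦ log (t v)) (Icc a b) :=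
    (convex_Icc a b).monotoneOn_of_hasDerivWithinAt_nonneg hlog_t fun u hu ↦
      div_nonneg (nonneg_of_mul_nonneg_right (hlo u hu) (hu_pos u hu)) (hpos u hu).le
  have hmono_gap : MonotoneOn ((fun v ↦ κ * log v) - fun v ↦ log (t v)) (Icc a b) := by
    refine (convex_Icc a b).monotoneOn_of_hasDerivWithinAt_nonneg
      (f' := fun u ↦ κ * u⁻¹ - t' u / t u) (fun u hu ↦ ?_) fun u hu ↦ ?_
    · exact (((hasDerivAt_log (hu_pos u hu).ne').hasDerivWithinAt).const_mul κ).sub (hlog_t u hu)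
    · rw [sub_nonneg, ← div_eq_mul_inv, div_le_div_iff₀ (hpos u hu) (hu_pos u hu), mul_comm]
      exact hhi u hu
  intro u hu u' hu'
  calc |log (t u) - log (t u')| ≤ |κ * log u - κ * log u'| :=
        abs_sub_le_abs_sub_of_monotoneOn hmono hmono_gap hu hu'
    _ = κ * |log u - log u'| := by rw [← mul_sub, abs_mul, abs_of_nonneg hκ]

/-- Logarithmic-Lipschitz estimate: if `0 ≤ u·t'(u) ≤ κ·t(u)` on `[a,b]` for a
positive differentiable travel-time function `t`, then
`|log t(u) − log t(ũ)| ≤ κ·|log u − log ũ|` on `[a,b]`. -/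
theorem log_lipschitz_of_elasticity_bound
    (a b : ℝ) (ha : 0 < a) (hab : a ≤ b)
    (κ : ℝ) (hκ : 0 ≤ κ)
    (t t' : ℝ → ℝ)
    (hderiv : ∀ u ∈ Set.Icc a b, HasDerivWithinAt t (t' u) (Set.Icc a b) u)
    (hpos : ∀ u ∈ Set.Icc a b, 0 < t u)
    (hlo : ∀ u ∈ Set.Icc a b, 0 ≤ u * t' u)
    (hhi : ∀ u ∈ Set.Icc a b, u * t' u ≤ κ * t u) :
    ∀ u ∈ Set.Icc a b, ∀ u' ∈ Set.Icc a b,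
      |Real.log (t u) - Real.log (t u')| ≤ κ * |Real.log u - Real.log u'| :=
  log_lipschitz_of_elasticity_bound_general a b ha κ hκ t t' hderiv hpos hlo hhi
end

section
/- Let A be a finite nonempty index set, M > 0, κ ∈ [0,1), and let u, ũ : A → ℝ have strictly positive entries with Σ_{a∈A} u_a = Σ_{a∈A} ũ_a = M. For each a ∈ A let t_a : ℝ → ℝ satisfy t_a(u_a) > 0, t_a(ũ_a) > 0, and min{(u_a/ũ_a)^κ, 1} ≤ t_a(u_a)/t_a(ũ_a) ≤ max{(u_a/ũ_a)^κ, 1}. Define Φ_a(v) = M·t_a(v_a)/(Σ_{a'∈A} t_{a'}(v_{a'})) and the spread D(v, w) = log( (max_{a∈A} v_a/w_a) / (min_{a∈A} v_a/w_a) ). Then D(Φ(u), Φ(ũ)) ≤ κ·D(u, ũ). -/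
private lemma ciInf_pos' {A : Type*} [Fintype A] [Nonempty A] (f : A → ℝ)
    (hf : ∀ a, 0 < f a) : 0 < ⨅ a, f a := by
  obtain ⟨a0, ha0⟩ := Finite.exists_min f
  have h : f a0 ≤ ⨅ a, f a := le_ciInf ha0
  linarith [hf a0]

/-- Spread-contraction estimate for the directed-cycle fixed-point map: if each
travel-time ratio satisfies `min{(u_a/ũ_a)^κ,1} ≤ t_a(u_a)/t_a(ũ_a) ≤ max{(u_a/ũ_a)^κ,1}`,
then `D(Φ(u), Φ(ũ)) ≤ κ·D(u, ũ)` where `D` is the spread. -/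
theorem cycle_map_spread_contraction
    {A : Type*} [Fintype A] [Nonempty A] (M : ℝ) (hM : 0 < M)
    (κ : ℝ) (hκ0 : 0 ≤ κ) (hκ1 : κ < 1)
    (u u' : A → ℝ) (hu : ∀ a, 0 < u a) (hu' : ∀ a, 0 < u' a)
    (hsum : ∑ a, u a = M) (hsum' : ∑ a, u' a = M)
    (t : A → ℝ → ℝ)
    (htpos : ∀ a, 0 < t a (u a)) (htpos' : ∀ a, 0 < t a (u' a))
    (hratio : ∀ a, min ((u a / u' a) ^ κ) 1 ≤ t a (u a) / t a (u' a) ∧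
      t a (u a) / t a (u' a) ≤ max ((u a / u' a) ^ κ) 1)
    (Φ : (A → ℝ) → A → ℝ)
    (hΦ : ∀ (v : A → ℝ) (a : A), Φ v a = M * t a (v a) / ∑ a', t a' (v a'))
    (Dsp : (A → ℝ) → (A → ℝ) → ℝ)
    (hD : ∀ v w : A → ℝ,
      Dsp v w = Real.log ((⨆ a, v a / w a) / (⨅ a, v a / w a))) :
    Dsp (Φ u) (Φ u') ≤ κ * Dsp u u' := by
  classical
  set S : ℝ := ∑ a, t a (u a) with hS
  set S' : ℝ := ∑ a, t a (u' a) with hS'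
  have hSpos : 0 < S := Finset.sum_pos (fun a _ => htpos a) Finset.univ_nonempty
  have hS'pos : 0 < S' := Finset.sum_pos (fun a _ => htpos' a) Finset.univ_nonempty
  set r : A → ℝ := fun a => t a (u a) / t a (u' a) with hr
  set ρ : A → ℝ := fun a => u a / u' a with hρ
  have hrpos : ∀ a, 0 < r a := fun a => div_pos (htpos a) (htpos' a)
  have hρpos : ∀ a, 0 < ρ a := fun a => div_pos (hu a) (hu' a)
  have hbddr : BddAbove (Set.range r) := (Set.finite_range r).bddAbove
  have hbddρ : BddAbove (Set.range ρ) := (Set.finite_range ρ).bddAbove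
  have hbdr : BddBelow (Set.range r) := (Set.finite_range r).bddBelow
  have hbdρ : BddBelow (Set.range ρ) := (Set.finite_range ρ).bddBelow
  -- there exist indices with ρ ≥ 1 and ρ ≤ 1
  have hex1 : ∃ a, 1 ≤ ρ a := by
    by_contra h
    push_neg at h
    have hlt : ∑ a, u a < ∑ a, u' a := by
      refine Finset.sum_lt_sum_of_nonempty Finset.univ_nonempty (fun a _ => ?_)
      exact (div_lt_one (hu' a)).mp (h a)
    linarith [hsum, hsum']
  have hex2 : ∃ a, ρ a ≤ 1 := by
    by_contra h
    push_neg at h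
    have hlt : ∑ a, u' a < ∑ a, u a := by
      refine Finset.sum_lt_sum_of_nonempty Finset.univ_nonempty (fun a _ => ?_)
      exact (one_lt_div (hu' a)).mp (h a)
    linarith [hsum, hsum']
  obtain ⟨a1, ha1⟩ := hex1
  obtain ⟨a2, ha2⟩ := hex2
  have hsupρ1 : 1 ≤ ⨆ a, ρ a := le_trans ha1 (le_ciSup hbddρ a1)
  have hinfρ1 : ⨅ a, ρ a ≤ 1 := le_trans (ciInf_le hbdρ a2) ha2
  have hinfρpos : 0 < ⨅ a, ρ a := ciInf_pos' ρ hρpos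
  have hinfrpos : 0 < ⨅ a, r a := ciInf_pos' r hrpos
  have hsupρpos : 0 < ⨆ a, ρ a := lt_of_lt_of_le one_pos hsupρ1
  have hsuprpos : 0 < ⨆ a, r a := lt_of_lt_of_le (hrpos a1) (le_ciSup hbddr a1)
  -- bound sup r ≤ (sup ρ)^κ
  have hsupr : (⨆ a, r a) ≤ (⨆ a, ρ a) ^ κ := by
    refine ciSup_le fun a => ?_
    refine le_trans (hratio a).2 (max_le ?_ ?_)
    · exact Real.rpow_le_rpow (le_of_lt (hρpos a)) (le_ciSup hbddρ a) hκ0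
    · exact Real.one_le_rpow hsupρ1 hκ0
  -- bound (inf ρ)^κ ≤ inf r
  have hinfr : (⨅ a, ρ a) ^ κ ≤ ⨅ a, r a := by
    refine le_ciInf fun a => ?_
    refine le_trans (le_min ?_ ?_) (hratio a).1
    · exact Real.rpow_le_rpow (le_of_lt hinfρpos) (ciInf_le hbdρ a) hκ0
    · exact Real.rpow_le_one (le_of_lt hinfρpos) hinfρ1 hκ0
  -- ratio of Φ's
  have hfun : ∀ a, Φ u a / Φ u' a = (S' / S) * r a := by
    intro a
    rw [hΦ, hΦ]
    rw [← hS, ← hS', hr]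
    have h1 : t a (u' a) ≠ 0 := ne_of_gt (htpos' a)
    field_simp
  have hc : (0:ℝ) < S' / S := div_pos hS'pos hSpos
  have hDΦ : Dsp (Φ u) (Φ u') = Real.log ((⨆ a, r a) / (⨅ a, r a)) := by
    rw [hD]
    have e1 : (⨆ a, Φ u a / Φ u' a) = (S'/S) * ⨆ a, r a := by
      rw [Real.mul_iSup_of_nonneg (le_of_lt hc)]
      exact iSup_congr hfun
    have e2 : (⨅ a, Φ u a / Φ u' a) = (S'/S) * ⨅ a, r a := by
      rw [Real.mul_iInf_of_nonneg (le_of_lt hc)]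
      exact iInf_congr hfun
    rw [e1, e2, mul_div_mul_left _ _ (ne_of_gt hc)]
  rw [hDΦ, hD]
  have hdivle : (⨆ a, r a) / (⨅ a, r a) ≤ (⨆ a, ρ a) ^ κ / (⨅ a, ρ a) ^ κ :=
    div_le_div₀ (le_of_lt (Real.rpow_pos_of_pos hsupρpos κ)) hsupr (Real.rpow_pos_of_pos hinfρpos κ) hinfr
  calc Real.log ((⨆ a, r a) / (⨅ a, r a))
      ≤ Real.log ((⨆ a, ρ a) ^ κ / (⨅ a, ρ a) ^ κ) :=
        Real.log_le_log (div_pos hsuprpos hinfrpos) hdivle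
    _ = κ * Real.log ((⨆ a, ρ a) / (⨅ a, ρ a)) := by
        rw [Real.log_div (ne_of_gt (Real.rpow_pos_of_pos hsupρpos κ))
          (ne_of_gt (Real.rpow_pos_of_pos hinfρpos κ)),
          Real.log_rpow hsupρpos, Real.log_rpow hinfρpos,
          Real.log_div (ne_of_gt hsupρpos) (ne_of_gt hinfρpos)]
        ring
end

section
/- Let A be a finite nonempty index set, M > 0, and for each a ∈ A let t_a : ℝ → ℝ be nondecreasing on [0,M] with t_a(0) > 0. Suppose u : A → ℝ satisfies u_a ≥ 0 for all a, Σ_{a∈A} u_a = M, and there exists ρ ∈ ℝ such that u_a = ρ·t_a(u_a) for all a ∈ A. Then for every a ∈ A, u_a ≥ M·t_a(0)/(Σ_{a'∈A} t_{a'}(M)); in particular, u_a ≥ M·(min_{a'} t_{a'}(0))/(|A|·max_{a'} t_{a'}(M)) > 0. -/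
/-!
Summing `u_a = ρ t_a(u_a)` over `a` gives `ρ = M / ∑ t_b(u_b)`, so
`u_a = M t_a(u_a) / ∑ t_b(u_b)`. Since every `u_b` lies in `[0, M]`, monotonicity bounds the
numerator below by `M t_a(0)` and the denominator above by `∑ t_b(M) ≤ |A| max_b t_b(M)`.
-/

open Finset

section

variable {A : Type*} [Fintype A]

theorem sum_le_card_mul_ciSup (f : A → ℝ) : ∑ a, f a ≤ Fintype.card A * ⨆ a, f a := by
  simpa [nsmul_eq_mul] using
    sum_le_card_nsmul univ f _ fun a _ => le_ciSup (Finite.bddAbove_range f) a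

theorem sum_mul_div_sum_eq_of_eq_mul {K : Type*} [Field K] {u s : A → K} {ρ : K}
    (hs : ∑ b, s b ≠ 0)
    (h : ∀ b, u b = ρ * s b) (a : A) : (∑ b, u b) * s a / ∑ b, s b = u a := by
  have htotal : ∑ b, u b = ρ * ∑ b, s b := by rw [mul_sum]; exact sum_congr rfl fun b _ => h b
  rw [htotal, h a]
  field_simp

end

theorem cycle_equilibrium_mass_lower_bound_general
    {A : Type*} [Fintype A] (M : ℝ) (hM : 0 < M)
    (t : A → ℝ → ℝ)
    (hmono : ∀ a, MonotoneOn (t a) (Set.Icc 0 M))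
    (hpos : ∀ a, 0 < t a 0)
    (u : A → ℝ) (hu : ∀ a, 0 ≤ u a) (hsum : ∑ a, u a = M)
    (ρ : ℝ) (hρ : ∀ a, u a = ρ * t a (u a)) :
    ∀ a, M * t a 0 / (∑ a', t a' M) ≤ u a ∧
      M * (⨅ a', t a' 0) / ((Fintype.card A : ℝ) * ⨆ a', t a' M) ≤ u a ∧
      0 < u a := by
  intro a
  have hmem : ∀ b, u b ∈ Set.Icc 0 M := fun b =>
    ⟨hu b, hsum ▸ single_le_sum (fun c _ => hu c) (mem_univ b)⟩
  have hzero : (0 : ℝ) ∈ Set.Icc 0 M := ⟨le_rfl, hM.le⟩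
  have htop : M ∈ Set.Icc 0 M := ⟨hM.le, le_rfl⟩
  have ht_zero_le : ∀ b, t b 0 ≤ t b (u b) := fun b => hmono b hzero (hmem b) (hu b)
  have ht_le_top : ∀ b, t b (u b) ≤ t b M := fun b => hmono b (hmem b) htop (hmem b).2
  have ht_pos : ∀ b, 0 < t b (u b) := fun b => (hpos b).trans_le (ht_zero_le b)
  have hsum_pos : 0 < ∑ b, t b (u b) := sum_pos (fun b _ => ht_pos b) ⟨a, mem_univ a⟩
  have hbound : M * t a 0 / ∑ b, t b M ≤ u a := calc
    M * t a 0 / ∑ b, t b M ≤ M * t a (u a) / ∑ b, t b (u b) :=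
      div_le_div₀ (mul_pos hM (ht_pos a)).le (mul_le_mul_of_nonneg_left (ht_zero_le a) hM.le)
        hsum_pos (sum_le_sum fun b _ => ht_le_top b)
    _ = u a := by rw [← hsum]; exact sum_mul_div_sum_eq_of_eq_mul hsum_pos.ne' hρ a
  have hsum_top_pos : 0 < ∑ b, t b M := hsum_pos.trans_le (sum_le_sum fun b _ => ht_le_top b)
  refine ⟨hbound, le_trans ?_ hbound, lt_of_lt_of_le (by have := hpos a; positivity) hbound⟩
  exact div_le_div₀ (by have := hpos a; positivity)
    (mul_le_mul_of_nonneg_left (ciInf_le (Finite.bddBelow_range _) a) hM.le) hsum_top_pos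
    (sum_le_card_mul_ciSup _)

/-- Every equilibrium mass vector on a directed-cycle network (constant flow
`u_a = ρ·t_a(u_a)` with total mass `M`) is bounded away from zero:
`u_a ≥ M·t_a(0)/Σ_{a'} t_{a'}(M) ≥ M·(min t(0))/(|A|·max t(M)) > 0`. -/
theorem cycle_equilibrium_mass_lower_bound
    {A : Type*} [Fintype A] [Nonempty A] (M : ℝ) (hM : 0 < M)
    (t : A → ℝ → ℝ)
    (hmono : ∀ a, MonotoneOn (t a) (Set.Icc 0 M))
    (hpos : ∀ a, 0 < t a 0)
    (u : A → ℝ) (hu : ∀ a, 0 ≤ u a) (hsum : ∑ a, u a = M)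
    (ρ : ℝ) (hρ : ∀ a, u a = ρ * t a (u a)) :
    ∀ a, M * t a 0 / (∑ a', t a' M) ≤ u a ∧
      M * (⨅ a', t a' 0) / ((Fintype.card A : ℝ) * ⨆ a', t a' M) ≤ u a ∧
      0 < u a :=
  cycle_equilibrium_mass_lower_bound_general M hM t hmono hpos u hu hsum ρ hρ
end

section
/- For every u ∈ (0,1), let v = (1−u)/2, and define t₁(v) = 1/(1−2v) and t₂(u) = 1/(1−u). Then u + 2v = 1 and u/t₂(u) = 2·(v/t₁(v)); equivalently, u·(1−u) = 2·v·(1−2v). Hence there is a continuum, parameterized by u ∈ (0,1), of solutions to the flow-conservation equation u_{2→1}/t_{2→1}(u_{2→1}) = 2·u_{1→2}/t_{1→2}(u_{1→2}) together with the mass-balance equation u_{2→1} + 2·u_{1→2} = 1. -/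
/-- A continuum of equilibria on the two-node shuttle network: for every
`u ∈ (0,1)`, setting `v = (1−u)/2`, with `t₁(v) = 1/(1−2v)` and `t₂(u) = 1/(1−u)`,
the mass-balance and flow-conservation equations hold. -/
theorem continuum_of_equilibria
    (t₁ t₂ : ℝ → ℝ)
    (ht₁ : ∀ v : ℝ, t₁ v = 1 / (1 - 2 * v))
    (ht₂ : ∀ u : ℝ, t₂ u = 1 / (1 - u)) :
    ∀ u ∈ Set.Ioo (0 : ℝ) 1,
      u + 2 * ((1 - u) / 2) = 1 ∧
      u / t₂ u = 2 * (((1 - u) / 2) / t₁ ((1 - u) / 2)) ∧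
      u * (1 - u) = 2 * (((1 - u) / 2) * (1 - 2 * ((1 - u) / 2))) := by
  rintro u ⟨hu0, hu1⟩
  have h : (1 : ℝ) - u ≠ 0 := by linarith
  refine ⟨by ring, ?_, by ring⟩
  rw [ht₁, ht₂]
  have : 1 - 2 * ((1 - u) / 2) = u := by ring
  rw [this]
  field_simp
end

section
/- Let A be a finite nonempty index set, M > 0, and ε ∈ (0, M/|A|]. Let Δ_ε = {u : A → ℝ | u_a ≥ ε for all a ∈ A and Σ_{a∈A} u_a = M}, equipped with the spread metric D(u, v) = log( (max_{a∈A} u_a/v_a) / (min_{a∈A} u_a/v_a) ). Then (Δ_ε, D) is a nonempty complete metric space. -/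
/-!
On a slice of constant mass `M` the spread dominates the sup distance,
`‖u - v‖∞ ≤ M (exp D(u, v) - 1)`, and on `Δ_ε`, where all coordinates are at least `ε`, it is
dominated by it, `D(u, v) ≤ 2 log (1 + ‖u - v‖∞ / ε)`. Hence a spread-Cauchy sequence in `Δ_ε` is
uniformly Cauchy, its limit lies in the closed set `Δ_ε`, and the second bound turns uniform
convergence into convergence in spread.
-/

open Real Filter Topology

section Spread

variable {A : Type*}

noncomputable def spreadRatio (u v : A → ℝ) : ℝ := (⨆ a, u a / v a) / ⨅ a, u a / v a

noncomputable def spread (u v : A → ℝ) : ℝ := log (spreadRatio u v)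

variable [Fintype A]

variable (A) in
def truncatedSimplex (M ε : ℝ) : Set (A → ℝ) :=
  {u | (∀ a, ε ≤ u a) ∧ ∑ a, u a = M}

lemma isClosed_truncatedSimplex (M ε : ℝ) : IsClosed (truncatedSimplex A M ε) := by
  simp only [truncatedSimplex, Set.ofPred_and, Set.ofPred_forall]
  exact (isClosed_iInter fun a => isClosed_le continuous_const (continuous_apply a)).inter
    (isClosed_eq (continuous_finsetSum _ fun a _ => continuous_apply a) continuous_const)

lemma div_le_one_add_dist_div {ε : ℝ} (hε : 0 < ε) {u v : A → ℝ} (hv : ∀ a, ε ≤ v a) (a : A) :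
    u a / v a ≤ 1 + dist u v / ε := by
  have hva : 0 < v a := hε.trans_le (hv a)
  have hd : u a - v a ≤ dist u v :=
    (le_abs_self _).trans (by simpa only [Real.dist_eq] using dist_le_pi_dist u v a)
  calc u a / v a = 1 + (u a - v a) / v a := by field_simp; ring
    _ ≤ 1 + dist u v / v a := by gcongr
    _ ≤ 1 + dist u v / ε := by gcongr; exact hv a

variable [Nonempty A]

lemma truncatedSimplex_nonempty {M ε : ℝ} (hε : ε ≤ M / Fintype.card A) :
    (truncatedSimplex A M ε).Nonempty := by
  refine ⟨fun _ => M / Fintype.card A, fun _ => hε, ?_⟩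
  rw [Finset.sum_const, Finset.card_univ, nsmul_eq_mul,
    mul_div_cancel₀ _ (Nat.cast_ne_zero.2 Fintype.card_ne_zero)]

lemma ciInf_pos_of_forall_pos {f : A → ℝ} (hf : ∀ a, 0 < f a) : 0 < ⨅ a, f a := by
  obtain ⟨a, ha⟩ := exists_eq_ciInf_of_finite (f := f)
  exact ha ▸ hf a

lemma ciSup_inv_eq_inv_ciInf {f : A → ℝ} (hf : ∀ a, 0 < f a) :
    ⨆ a, (f a)⁻¹ = (⨅ a, f a)⁻¹ := by
  obtain ⟨a₀, ha₀⟩ := exists_eq_ciInf_of_finite (f := f)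
  rw [← ha₀]
  exact le_antisymm (ciSup_le fun a => inv_anti₀ (hf a₀) (ha₀.trans_le (Finite.ciInf_le f a)))
    (Finite.le_ciSup (fun a => (f a)⁻¹) a₀)

lemma ciInf_div_le_one_of_sum_eq {u v : A → ℝ} (hv : ∀ a, 0 < v a) (hs : ∑ a, u a = ∑ a, v a) :
    ⨅ a, u a / v a ≤ 1 := by
  by_contra! h
  have hlt : ∑ a, v a < ∑ a, u a :=
    Finset.sum_lt_sum_of_nonempty Finset.univ_nonempty fun a _ =>
      (one_lt_div (hv a)).1 (h.trans_le (Finite.ciInf_le (fun a => u a / v a) a))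
  exact hlt.ne' hs

section Positive

variable {u v w : A → ℝ} (hu : ∀ a, 0 < u a) (hv : ∀ a, 0 < v a)
include hu hv

lemma one_le_spreadRatio : 1 ≤ spreadRatio u v :=
  (one_le_div (ciInf_pos_of_forall_pos fun a => div_pos (hu a) (hv a))).2
    (ciInf_le_ciSup (Set.finite_range _).bddBelow (Set.finite_range _).bddAbove)

lemma spreadRatio_pos : 0 < spreadRatio u v :=
  one_pos.trans_le (one_le_spreadRatio hu hv)

lemma exp_spread : exp (spread u v) = spreadRatio u v :=
  exp_log (spreadRatio_pos hu hv)

lemma spread_nonneg : 0 ≤ spread u v :=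
  log_nonneg (one_le_spreadRatio hu hv)

lemma spreadRatio_comm : spreadRatio v u = spreadRatio u v := by
  have hS : ⨆ a, v a / u a = (⨅ a, u a / v a)⁻¹ := by
    simpa only [inv_div] using ciSup_inv_eq_inv_ciInf fun a => div_pos (hu a) (hv a)
  have hI : ⨅ a, v a / u a = (⨆ a, u a / v a)⁻¹ := by
    have h := ciSup_inv_eq_inv_ciInf fun a => div_pos (hv a) (hu a)
    simp only [inv_div] at h
    rw [h, inv_inv]
  rw [spreadRatio, spreadRatio, hS, hI, inv_div_inv]

lemma spread_comm : spread v u = spread u v := by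
  rw [spread, spread, spreadRatio_comm hu hv]

lemma spreadRatio_le_mul (hw : ∀ a, 0 < w a) :
    spreadRatio u w ≤ spreadRatio u v * spreadRatio v w := by
  have hquot (a : A) : u a / w a = u a / v a * (v a / w a) := (div_mul_div_cancel₀ (hv a).ne').symm
  have huv (a : A) : 0 < u a / v a := div_pos (hu a) (hv a)
  have hvw (a : A) : 0 < v a / w a := div_pos (hv a) (hw a)
  have hS : ⨆ a, u a / w a ≤ (⨆ a, u a / v a) * ⨆ a, v a / w a :=
    ciSup_le fun a => hquot a ▸ mul_le_mul (Finite.le_ciSup (fun a => u a / v a) a)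
      (Finite.le_ciSup (fun a => v a / w a) a) (hvw a).le (Real.iSup_nonneg fun a => (huv a).le)
  have hI : (⨅ a, u a / v a) * ⨅ a, v a / w a ≤ ⨅ a, u a / w a :=
    le_ciInf fun a => hquot a ▸ mul_le_mul (Finite.ciInf_le (fun a => u a / v a) a)
      (Finite.ciInf_le (fun a => v a / w a) a)
      (ciInf_pos_of_forall_pos hvw).le (huv a).le
  rw [spreadRatio, spreadRatio, spreadRatio, div_mul_div_comm]
  exact div_le_div₀ (mul_nonneg (Real.iSup_nonneg fun a => (huv a).le)
    (Real.iSup_nonneg fun a => (hvw a).le)) hS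
    (mul_pos (ciInf_pos_of_forall_pos huv) (ciInf_pos_of_forall_pos hvw)) hI

lemma spread_triangle (hw : ∀ a, 0 < w a) : spread u w ≤ spread u v + spread v w := by
  rw [spread, spread, spread, ← log_mul (spreadRatio_pos hu hv).ne' (spreadRatio_pos hv hw).ne']
  exact log_le_log (spreadRatio_pos hu hw) (spreadRatio_le_mul hu hv hw)

lemma spread_le_two_mul_log {c : ℝ} (huv : ∀ a, u a / v a ≤ c) (hvu : ∀ a, v a / u a ≤ c) :
    spread u v ≤ 2 * log c := by
  have hc : 0 < c := (div_pos (hv (Classical.arbitrary A)) (hu _)).trans_le (hvu _)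
  have hS : ⨆ a, u a / v a ≤ c := ciSup_le huv
  have hI : c⁻¹ ≤ ⨅ a, u a / v a :=
    le_ciInf fun a => inv_le_of_inv_le₀ (div_pos (hu a) (hv a)) (inv_div (u a) (v a) ▸ hvu a)
  have hR : spreadRatio u v ≤ c ^ 2 := by
    rw [spreadRatio, sq, ← div_inv_eq_mul]
    exact div_le_div₀ hc.le hS (inv_pos.2 hc) hI
  calc spread u v ≤ log (c ^ 2) := log_le_log (spreadRatio_pos hu hv) hR
    _ = 2 * log c := by rw [log_pow]; norm_num

variable (hs : ∑ a, u a = ∑ a, v a)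
include hs

lemma div_le_spreadRatio (a : A) : u a / v a ≤ spreadRatio u v :=
  (Finite.le_ciSup (fun a => u a / v a) a).trans <|
    le_div_self (Real.iSup_nonneg fun a => (div_pos (hu a) (hv a)).le)
    (ciInf_pos_of_forall_pos fun a => div_pos (hu a) (hv a)) (ciInf_div_le_one_of_sum_eq hv hs)

lemma sub_le_sum_mul_spreadRatio_sub_one (a : A) :
    u a - v a ≤ (∑ b, v b) * (spreadRatio u v - 1) := by
  have hua : u a ≤ v a * spreadRatio u v := by
    rw [mul_comm]
    exact (div_le_iff₀ (hv a)).1 (div_le_spreadRatio hu hv hs a)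
  have hva : v a ≤ ∑ b, v b := Finset.single_le_sum (fun b _ => (hv b).le) (Finset.mem_univ a)
  calc u a - v a ≤ v a * (spreadRatio u v - 1) := by linarith
    _ ≤ (∑ b, v b) * (spreadRatio u v - 1) :=
      mul_le_mul_of_nonneg_right hva (sub_nonneg.2 (one_le_spreadRatio hu hv))

lemma dist_le_sum_mul_exp_spread_sub_one : dist u v ≤ (∑ a, v a) * (exp (spread u v) - 1) := by
  rw [exp_spread hu hv]
  refine (dist_pi_le_iff (mul_nonneg (Finset.sum_nonneg fun a _ => (hv a).le)
    (sub_nonneg.2 (one_le_spreadRatio hu hv)))).2 fun a => ?_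
  rw [Real.dist_eq, abs_sub_le_iff]
  refine ⟨sub_le_sum_mul_spreadRatio_sub_one hu hv hs a, ?_⟩
  have h := sub_le_sum_mul_spreadRatio_sub_one hv hu hs.symm a
  rwa [hs, spreadRatio_comm hu hv] at h

lemma spread_eq_zero_iff : spread u v = 0 ↔ u = v := by
  constructor
  · intro h
    have hd := dist_le_sum_mul_exp_spread_sub_one hu hv hs
    rw [h, exp_zero, sub_self, mul_zero] at hd
    exact dist_le_zero.1 hd
  · rintro rfl
    simp [spread, spreadRatio, div_self (hu _).ne']

end Positive

lemma spread_le_two_mul_log_one_add_dist {ε : ℝ} (hε : 0 < ε) {u v : A → ℝ}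
    (hu : ∀ a, ε ≤ u a) (hv : ∀ a, ε ≤ v a) : spread u v ≤ 2 * log (1 + dist u v / ε) :=
  spread_le_two_mul_log (fun a => hε.trans_le (hu a)) (fun a => hε.trans_le (hv a))
    (div_le_one_add_dist_div hε hv) (fun a => dist_comm u v ▸ div_le_one_add_dist_div hε hu a)

lemma cauchySeq_of_spread {M : ℝ} {u : ℕ → A → ℝ} (hu : ∀ n a, 0 < u n a)
    (hs : ∀ n, ∑ a, u n a = M)
    (hC : ∀ δ : ℝ, 0 < δ → ∃ N : ℕ, ∀ m ≥ N, ∀ n ≥ N, spread (u m) (u n) < δ) :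
    CauchySeq u := by
  have hM : 0 < M := hs 0 ▸ Finset.sum_pos (fun a _ => hu 0 a) Finset.univ_nonempty
  refine Metric.cauchySeq_iff.2 fun η hη => ?_
  have hδ : 0 < log (1 + η / M) := log_pos (lt_add_of_pos_right 1 (div_pos hη hM))
  obtain ⟨N, hN⟩ := hC _ hδ
  refine ⟨N, fun m hm n hn => ?_⟩
  calc dist (u m) (u n) ≤ M * (exp (spread (u m) (u n)) - 1) :=
        hs n ▸ dist_le_sum_mul_exp_spread_sub_one (hu m) (hu n) ((hs m).trans (hs n).symm)
    _ < M * (exp (log (1 + η / M)) - 1) := by gcongr; exact hN m hm n hn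
    _ = η := by rw [exp_log (by positivity), add_sub_cancel_left, mul_div_cancel₀ _ hM.ne']

lemma tendsto_spread_zero_of_tendsto {ι : Type*} {F : Filter ι} {ε : ℝ} (hε : 0 < ε) {u : ι → A → ℝ}
    {l : A → ℝ} (hu : ∀ i a, ε ≤ u i a) (hl : ∀ a, ε ≤ l a) (h : Tendsto u F (𝓝 l)) :
    Tendsto (fun i => spread (u i) l) F (𝓝 0) := by
  have hbound : Tendsto (fun i => 2 * log (1 + dist (u i) l / ε)) F (𝓝 (2 * log (1 + 0 / ε))) :=
    (((tendsto_iff_dist_tendsto_zero.1 h).div_const ε).const_add 1).log (by simp) |>.const_mul 2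
  rw [zero_div, add_zero, log_one, mul_zero] at hbound
  exact tendsto_of_tendsto_of_tendsto_of_le_of_le tendsto_const_nhds hbound
    (fun i => spread_nonneg (fun a => hε.trans_le (hu i a)) fun a => hε.trans_le (hl a))
    (fun i => spread_le_two_mul_log_one_add_dist hε (hu i) hl)

end Spread

theorem truncated_simplex_spread_complete_general
    {A : Type*} [Fintype A] [Nonempty A] (M ε : ℝ)
    (hε0 : 0 < ε) (hεle : ε ≤ M / (Fintype.card A : ℝ))
    (Δ : Set (A → ℝ))
    (hΔ : Δ = {u : A → ℝ | (∀ a, ε ≤ u a) ∧ ∑ a, u a = M})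
    (Dsp : (A → ℝ) → (A → ℝ) → ℝ)
    (hD : ∀ u v : A → ℝ,
      Dsp u v = Real.log ((⨆ a, u a / v a) / (⨅ a, u a / v a))) :
    Δ.Nonempty ∧
    (∀ u ∈ Δ, ∀ v ∈ Δ, 0 ≤ Dsp u v ∧ (Dsp u v = 0 ↔ u = v) ∧ Dsp u v = Dsp v u) ∧
    (∀ u ∈ Δ, ∀ v ∈ Δ, ∀ w ∈ Δ, Dsp u w ≤ Dsp u v + Dsp v w) ∧
    (∀ u : ℕ → A → ℝ, (∀ n, u n ∈ Δ) →
      (∀ δ : ℝ, 0 < δ → ∃ N : ℕ, ∀ m ≥ N, ∀ n ≥ N, Dsp (u m) (u n) < δ) →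
      ∃ l ∈ Δ, Filter.Tendsto (fun n => Dsp (u n) l) Filter.atTop (nhds 0)) := by
  obtain rfl : Dsp = spread := funext fun u => funext (hD u)
  obtain rfl : Δ = truncatedSimplex A M ε := hΔ
  have hpos {u : A → ℝ} (hu : u ∈ truncatedSimplex A M ε) (a : A) : 0 < u a :=
    hε0.trans_le (hu.1 a)
  refine ⟨truncatedSimplex_nonempty hεle, fun u hu v hv => ?_,
    fun u hu v hv w hw => spread_triangle (hpos hu) (hpos hv) (hpos hw), fun u hu hC => ?_⟩
  · exact ⟨spread_nonneg (hpos hu) (hpos hv),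
      spread_eq_zero_iff (hpos hu) (hpos hv) (hu.2.trans hv.2.symm),
      (spread_comm (hpos hu) (hpos hv)).symm⟩
  · obtain ⟨l, hl⟩ := cauchySeq_tendsto_of_complete
      (cauchySeq_of_spread (fun n => hpos (hu n)) (fun n => (hu n).2) hC)
    have hlΔ : l ∈ truncatedSimplex A M ε :=
      (isClosed_truncatedSimplex M ε).mem_of_tendsto hl (Eventually.of_forall hu)
    exact ⟨l, hlΔ, tendsto_spread_zero_of_tendsto hε0 (fun n => (hu n).1) hlΔ.1 hl⟩

/-- The truncated simplex `Δ_ε = {u : u_a ≥ ε, Σ_a u_a = M}` equipped with the spread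
`D(u,v) = log((max_a u_a/v_a)/(min_a u_a/v_a))` is a nonempty complete metric space:
`Δ_ε` is nonempty, the spread is a metric on it, and every spread-Cauchy sequence in
`Δ_ε` converges (in spread) to a point of `Δ_ε`. -/
theorem truncated_simplex_spread_complete
    {A : Type*} [Fintype A] [Nonempty A] (M ε : ℝ) (hM : 0 < M)
    (hε0 : 0 < ε) (hεle : ε ≤ M / (Fintype.card A : ℝ))
    (Δ : Set (A → ℝ))
    (hΔ : Δ = {u : A → ℝ | (∀ a, ε ≤ u a) ∧ ∑ a, u a = M})
    (Dsp : (A → ℝ) → (A → ℝ) → ℝ)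
    (hD : ∀ u v : A → ℝ,
      Dsp u v = Real.log ((⨆ a, u a / v a) / (⨅ a, u a / v a))) :
    Δ.Nonempty ∧
    (∀ u ∈ Δ, ∀ v ∈ Δ, 0 ≤ Dsp u v ∧ (Dsp u v = 0 ↔ u = v) ∧ Dsp u v = Dsp v u) ∧
    (∀ u ∈ Δ, ∀ v ∈ Δ, ∀ w ∈ Δ, Dsp u w ≤ Dsp u v + Dsp v w) ∧
    (∀ u : ℕ → A → ℝ, (∀ n, u n ∈ Δ) →
      (∀ δ : ℝ, 0 < δ → ∃ N : ℕ, ∀ m ≥ N, ∀ n ≥ N, Dsp (u m) (u n) < δ) →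
      ∃ l ∈ Δ, Filter.Tendsto (fun n => Dsp (u n) l) Filter.atTop (nhds 0)) :=
  truncated_simplex_spread_complete_general M ε hε0 hεle Δ hΔ Dsp hD
end
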